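/- arXiv:2510.17610 — 5 statements merged into one kernel-verified Lean document; each statement's English description precedes it below -/
import Mathlib

section
/- Let V be a finite set and f : P(V) → ℝ a monotone submodular function. Then for any sets A, B ⊆ V, f(B) ≤ f(A) + Σ_{v ∈ B \ A} Δ(f, v | A), i.e., the value of f at B is bounded above by f(A) plus the sum over the elements v of B not in A of the marginal gain of v at A. -/
open Finset

section Submodular

variable {α β : Type*} [DecidableEq α] [AddCommGroup β] [PartialOrder β] [IsOrderedAddMonoid β]

theorem le_add_sum_marginal_gains_of_disjoint (f : Finset α → β)
    (hsub : ∀ A B : Finset α, A ⊆ B → ∀ v ∉ B,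
        f (insert v B) - f B ≤ f (insert v A) - f A)
    (A : Finset α) {S : Finset α} (hS : Disjoint A S) :
    f (A ∪ S) ≤ f A + ∑ v ∈ S, (f (insert v A) - f A) := by
  induction S using Finset.induction_on with
  | empty => simp
  | @insert v S hvS ih =>
    rw [disjoint_insert_right] at hS
    have hv : v ∉ A ∪ S := by simp [hS.1, hvS]
    have hgain := hsub A (A ∪ S) subset_union_left v hv
    calc f (A ∪ insert v S) = f (A ∪ S) + (f (insert v (A ∪ S)) - f (A ∪ S)) := by
          rw [union_insert, add_sub_cancel]
      _ ≤ f A + ∑ v ∈ S, (f (insert v A) - f A) + (f (insert v A) - f A) :=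
          add_le_add (ih hS.2) hgain
      _ = f A + ∑ v ∈ insert v S, (f (insert v A) - f A) := by
          rw [sum_insert hvS, add_assoc, add_comm (f (insert v A) - f A)]

end Submodular

theorem le_add_sum_marginal_gains_general
    {V : Type*} [DecidableEq V] (f : Finset V → ℝ)
    (hmono : ∀ A B : Finset V, A ⊆ B → f A ≤ f B)
    (hsub : ∀ A B : Finset V, A ⊆ B → ∀ v ∉ B,
        f (insert v B) - f B ≤ f (insert v A) - f A)
    (A B : Finset V) :
    f B ≤ f A + ∑ v ∈ B \ A, (f (insert v A) - f A) :=
  calc f B ≤ f (A ∪ B) := hmono _ _ subset_union_right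
    _ = f (A ∪ (B \ A)) := by rw [union_sdiff_self_eq_union]
    _ ≤ _ := le_add_sum_marginal_gains_of_disjoint f hsub A disjoint_sdiff

/-- for a monotone submodular `f` and any `A, B ⊆ V`,
`f B ≤ f A + ∑_{v ∈ B \ A} Δ(f, v | A)`. -/
theorem le_add_sum_marginal_gains
    {V : Type*} [Fintype V] [DecidableEq V] (f : Finset V → ℝ)
    (hmono : ∀ A B : Finset V, A ⊆ B → f A ≤ f B)
    (hsub : ∀ A B : Finset V, A ⊆ B → ∀ v ∉ B,
        f (insert v B) - f B ≤ f (insert v A) - f A)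
    (A B : Finset V) :
    f B ≤ f A + ∑ v ∈ B \ A, (f (insert v A) - f A) :=
  le_add_sum_marginal_gains_general f hmono hsub A B
end

section
/- Let V be a finite set with n elements, let f : P(V) → [0, ∞) be a monotone submodular function with f(∅) = 0, and let k ∈ {1, …, n}. Let S₀ = ∅ and, for l = 1, …, k, let S_l = S_{l−1} ∪ {v_l} where v_l ∈ V \ S_{l−1} maximizes the marginal gain Δ(f, v | S_{l−1}) over v ∈ V \ S_{l−1} (the greedy sequence). Let S* be any subset of V with |S*| = k. Then for every l ∈ {0, …, k−1}, f(S*) − f(S_l) ≤ k·(f(S_{l+1}) − f(S_l)). -/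
/-!
By submodularity, adding the `k` elements of `S*` to `S_l` one at a time gains at most the sum of
their individual marginal gains at `S_l`, and the greedy choice makes each of those at most
`f(S_{l+1}) - f(S_l)`. Monotonicity gives `f(S*) ≤ f(S_l ∪ S*)`.
-/

section SetFunction

variable {V : Type*} [DecidableEq V] (f : Finset V → ℝ)

theorem sub_le_sum_marginal_gain_of_submodular
    (hsub : ∀ A B : Finset V, A ⊆ B → ∀ v ∉ B,
        f (insert v B) - f B ≤ f (insert v A) - f A)
    (A B : Finset V) : f (A ∪ B) - f A ≤ ∑ v ∈ B, (f (insert v A) - f A) := by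
  induction B using Finset.induction_on with
  | empty => simp
  | insert b B hb ih =>
    rw [Finset.sum_insert hb, Finset.union_insert]
    by_cases hbA : b ∈ A
    · rw [Finset.insert_eq_self.mpr (Finset.mem_union_left B hbA), Finset.insert_eq_self.mpr hbA]
      linarith
    · have hdim := hsub A (A ∪ B) Finset.subset_union_left b (by simp [hbA, hb])
      linarith

theorem marginal_gain_le_of_forall_not_mem_le (hmono : Monotone f) {A : Finset V} {w : V}
    (hw : ∀ u ∉ A, f (insert u A) - f A ≤ f (insert w A) - f A) (u : V) :
    f (insert u A) - f A ≤ f (insert w A) - f A := by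
  by_cases hu : u ∈ A
  · rw [Finset.insert_eq_self.mpr hu, sub_self, sub_nonneg]
    exact hmono (Finset.subset_insert w A)
  · exact hw u hu

theorem sub_le_card_mul_greedy_gain (hmono : Monotone f)
    (hsub : ∀ A B : Finset V, A ⊆ B → ∀ v ∉ B,
        f (insert v B) - f B ≤ f (insert v A) - f A)
    {A : Finset V} {w : V}
    (hw : ∀ u ∉ A, f (insert u A) - f A ≤ f (insert w A) - f A) (T : Finset V) :
    f T - f A ≤ T.card * (f (insert w A) - f A) :=
  calc f T - f A
      ≤ f (A ∪ T) - f A := by linarith [hmono (Finset.subset_union_right : T ⊆ A ∪ T)]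
    _ ≤ ∑ v ∈ T, (f (insert v A) - f A) := sub_le_sum_marginal_gain_of_submodular f hsub A T
    _ ≤ ∑ _v ∈ T, (f (insert w A) - f A) :=
        Finset.sum_le_sum fun u _ => marginal_gain_le_of_forall_not_mem_le f hmono hw u
    _ = T.card * (f (insert w A) - f A) := by rw [Finset.sum_const, nsmul_eq_mul]

end SetFunction

theorem greedy_per_step_gain_general
    {V : Type*} [DecidableEq V] (f : Finset V → ℝ)
    (hmono : ∀ A B : Finset V, A ⊆ B → f A ≤ f B)
    (hsub : ∀ A B : Finset V, A ⊆ B → ∀ v ∉ B,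
        f (insert v B) - f B ≤ f (insert v A) - f A)
    (k : ℕ)
    (S : ℕ → Finset V)
    (hstep : ∀ l < k, ∃ w ∉ S l,
        S (l + 1) = insert w (S l) ∧
        ∀ u ∉ S l, f (insert u (S l)) - f (S l) ≤ f (insert w (S l)) - f (S l))
    (Sstar : Finset V) (hSstar : Sstar.card = k) :
    ∀ l < k, f Sstar - f (S l) ≤ (k : ℝ) * (f (S (l + 1)) - f (S l)) := by
  intro l hl
  obtain ⟨w, -, hSsucc, hgreedy⟩ := hstep l hl
  rw [hSsucc, ← hSstar]
  exact sub_le_card_mul_greedy_gain f (fun A B => hmono A B) hsub hgreedy Sstar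

/-- along the greedy sequence `S₀ = ∅`,
`S_{l+1} = S_l ∪ {argmax of marginal gain}`, for any `S*` with `|S*| = k`
and any `l ∈ {0, …, k-1}`,
`f S* - f (S l) ≤ k * (f (S (l+1)) - f (S l))`. -/
theorem greedy_per_step_gain
    {V : Type*} [Fintype V] [DecidableEq V] (f : Finset V → ℝ)
    (hnonneg : ∀ A : Finset V, 0 ≤ f A)
    (hmono : ∀ A B : Finset V, A ⊆ B → f A ≤ f B)
    (hsub : ∀ A B : Finset V, A ⊆ B → ∀ v ∉ B,
        f (insert v B) - f B ≤ f (insert v A) - f A)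
    (hf0 : f ∅ = 0)
    (k : ℕ) (hk1 : 1 ≤ k) (hkn : k ≤ Fintype.card V)
    (S : ℕ → Finset V) (hS0 : S 0 = ∅)
    (hstep : ∀ l < k, ∃ w ∉ S l,
        S (l + 1) = insert w (S l) ∧
        ∀ u ∉ S l, f (insert u (S l)) - f (S l) ≤ f (insert w (S l)) - f (S l))
    (Sstar : Finset V) (hSstar : Sstar.card = k) :
    ∀ l < k, f Sstar - f (S l) ≤ (k : ℝ) * (f (S (l + 1)) - f (S l)) :=
  greedy_per_step_gain_general f hmono hsub k S hstep Sstar hSstar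
end

section
/- Let V be a finite set with n elements, let f : P(V) → [0, ∞) be a monotone submodular function with f(∅) = 0, and let k ∈ {1, …, n} with k ≥ 1. Let {S_l}_{l=0}^{k} be the greedy sequence and S* a subset of V of cardinality k maximizing f over subsets of size k. Define the optimality gap δ_l := f(S*) − f(S_l). Then for every l ∈ {0, …, k−1}, δ_{l+1} ≤ (1 − 1/k)·δ_l. -/
/-! Submodularity bounds the gain of adding all of `S*` to the current greedy set `A` by the sum of
the single-element gains at `A`, each of which is at most the greedy gain `g`; monotonicity then gives
`f S* - f A ≤ k g`. So the greedy step closes at least a `1/k` fraction of the current gap. -/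

open Finset

section Submodular

variable {α β : Type*} [DecidableEq α] [AddCommGroup β] [PartialOrder β] [IsOrderedAddMonoid β]
  {f : Finset α → β}

theorem sub_le_sum_insert_sub_of_submodular
    (hsub : ∀ A B : Finset α, A ⊆ B → ∀ v ∉ B, f (insert v B) - f B ≤ f (insert v A) - f A)
    {A T : Finset α} (hAT : Disjoint A T) :
    f (A ∪ T) - f A ≤ ∑ v ∈ T, (f (insert v A) - f A) := by
  induction T using Finset.induction_on with
  | empty => simp
  | insert a T haT ih =>
    rw [disjoint_insert_right] at hAT
    have hgain : f (insert a (A ∪ T)) - f (A ∪ T) ≤ f (insert a A) - f A :=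
      hsub A (A ∪ T) subset_union_left a (by simp [hAT.1, haT])
    calc f (A ∪ insert a T) - f A
        = (f (insert a (A ∪ T)) - f (A ∪ T)) + (f (A ∪ T) - f A) := by
          rw [union_insert]; abel
      _ ≤ (f (insert a A) - f A) + ∑ v ∈ T, (f (insert v A) - f A) := add_le_add hgain (ih hAT.2)
      _ = ∑ v ∈ insert a T, (f (insert v A) - f A) := by rw [sum_insert haT]

theorem sub_le_card_sdiff_nsmul_of_submodular (hmono : ∀ A B : Finset α, A ⊆ B → f A ≤ f B)
    (hsub : ∀ A B : Finset α, A ⊆ B → ∀ v ∉ B, f (insert v B) - f B ≤ f (insert v A) - f A)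
    {A : Finset α} {g : β} (hg : ∀ v ∉ A, f (insert v A) - f A ≤ g) (T : Finset α) :
    f T - f A ≤ #(T \ A) • g :=
  calc f T - f A
      ≤ f (A ∪ (T \ A)) - f A := by
        gcongr; exact hmono _ _ (by simp [union_sdiff_self_eq_union])
    _ ≤ ∑ v ∈ T \ A, (f (insert v A) - f A) :=
        sub_le_sum_insert_sub_of_submodular hsub disjoint_sdiff
    _ ≤ ∑ _v ∈ T \ A, g := sum_le_sum fun v hv => hg v (mem_sdiff.mp hv).2
    _ = #(T \ A) • g := sum_const g

end Submodular

theorem greedy_gap_contraction_general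
    {V : Type*} [DecidableEq V] (f : Finset V → ℝ)
    (hmono : ∀ A B : Finset V, A ⊆ B → f A ≤ f B)
    (hsub : ∀ A B : Finset V, A ⊆ B → ∀ v ∉ B,
        f (insert v B) - f B ≤ f (insert v A) - f A)
    (k : ℕ)
    (S : ℕ → Finset V)
    (hstep : ∀ l < k, ∃ w ∉ S l,
        S (l + 1) = insert w (S l) ∧
        ∀ u ∉ S l, f (insert u (S l)) - f (S l) ≤ f (insert w (S l)) - f (S l))
    (Sstar : Finset V) (hSstar : Sstar.card = k) :
    ∀ l < k, f Sstar - f (S (l + 1)) ≤ (1 - 1 / (k : ℝ)) * (f Sstar - f (S l)) := by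
  intro l hl
  obtain ⟨w, -, hSsucc, hgreedy⟩ := hstep l hl
  set g := f (insert w (S l)) - f (S l)
  have hg : 0 ≤ g := sub_nonneg.mpr (hmono _ _ (subset_insert w (S l)))
  have hgap : f Sstar - f (S l) ≤ k * g :=
    calc f Sstar - f (S l)
        ≤ #(Sstar \ S l) • g := sub_le_card_sdiff_nsmul_of_submodular hmono hsub hgreedy Sstar
      _ ≤ k * g := by
        rw [nsmul_eq_mul, ← hSstar]
        gcongr
        exact sdiff_subset
  have hk : (0 : ℝ) < k := by exact_mod_cast pos_of_gt hl
  have hSsucc' : f (S (l + 1)) = f (S l) + g := by rw [hSsucc]; ring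
  rw [hSsucc', sub_mul, one_mul, one_div_mul_eq_div]
  have : (f Sstar - f (S l)) / k ≤ g := (div_le_iff₀ hk).mpr (by linarith)
  linarith

/-- with `S*` a maximizer of `f` over subsets of cardinality `k`
and `δ_l = f S* - f (S l)` the optimality gap along the greedy sequence,
`δ_{l+1} ≤ (1 - 1/k) * δ_l` for every `l ∈ {0, …, k-1}`. -/
theorem greedy_gap_contraction
    {V : Type*} [Fintype V] [DecidableEq V] (f : Finset V → ℝ)
    (hnonneg : ∀ A : Finset V, 0 ≤ f A)
    (hmono : ∀ A B : Finset V, A ⊆ B → f A ≤ f B)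
    (hsub : ∀ A B : Finset V, A ⊆ B → ∀ v ∉ B,
        f (insert v B) - f B ≤ f (insert v A) - f A)
    (hf0 : f ∅ = 0)
    (k : ℕ) (hk1 : 1 ≤ k) (hkn : k ≤ Fintype.card V)
    (S : ℕ → Finset V) (hS0 : S 0 = ∅)
    (hstep : ∀ l < k, ∃ w ∉ S l,
        S (l + 1) = insert w (S l) ∧
        ∀ u ∉ S l, f (insert u (S l)) - f (S l) ≤ f (insert w (S l)) - f (S l))
    (Sstar : Finset V) (hSstar : Sstar.card = k)
    (hmax : ∀ T : Finset V, T.card = k → f T ≤ f Sstar) :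
    ∀ l < k, f Sstar - f (S (l + 1)) ≤ (1 - 1 / (k : ℝ)) * (f Sstar - f (S l)) :=
  greedy_gap_contraction_general f hmono hsub k S hstep Sstar hSstar
end

section
/- Let V be a finite set with n elements and let f : P(V) → [0, ∞) be a monotone submodular function with f(∅) = 0. Let k ∈ {1, …, n} and let {S_l}_{l=1}^{k} be produced by the greedy procedure: S₀ = ∅ and S_l = S_{l−1} ∪ {argmax_{v ∈ V \ S_{l−1}} Δ(f, v | S_{l−1})} for l = 1, …, k. Then f(S_k) ≥ (1 − 1/e) · max{ f(S) : S ⊆ V, |S| = k }. -/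
/-!
Let `T` be an optimal `k`-set. At any stage `A` of the greedy procedure, monotonicity and
submodularity give `f T - f A ≤ f (A ∪ T) - f A ≤ ∑_{v ∈ T \ A} Δ(f, v | A) ≤ k · Δ(f, w | A)`,
where `w` is the greedy choice. So each greedy step closes at least a `1/k` fraction of the gap
`f T - f A`, and after `k` steps the gap is at most `(1 - 1/k)^k f T ≤ e⁻¹ f T`.
-/

section MarginalGain

open Finset

variable {V β : Type*} [DecidableEq V] [AddCommGroup β] [PartialOrder β] [IsOrderedAddMonoid β]

def marginalGain (f : Finset V → β) (v : V) (A : Finset V) : β := f (insert v A) - f A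

lemma sub_le_sum_marginalGain {f : Finset V → β}
    (hsub : ∀ A B : Finset V, A ⊆ B → ∀ v ∉ B, marginalGain f v B ≤ marginalGain f v A)
    (A T : Finset V) :
    f (A ∪ T) - f A ≤ ∑ v ∈ T, marginalGain f v A := by
  induction T using Finset.induction_on with
  | empty => simp
  | @insert v T hvT ih =>
    rw [sum_insert hvT, union_insert]
    by_cases hvAT : v ∈ A ∪ T
    · have hvA : v ∈ A := (mem_union.1 hvAT).resolve_right hvT
      simpa [marginalGain, insert_eq_of_mem hvAT, insert_eq_of_mem hvA] using ih
    · have hstep := hsub A (A ∪ T) subset_union_left v hvAT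
      have := add_le_add hstep ih
      rwa [marginalGain, sub_add_sub_cancel] at this

lemma sub_le_card_sdiff_nsmul {f : Finset V → β}
    (hmono : ∀ A B : Finset V, A ⊆ B → f A ≤ f B)
    (hsub : ∀ A B : Finset V, A ⊆ B → ∀ v ∉ B, marginalGain f v B ≤ marginalGain f v A)
    {A T : Finset V} {g : β} (hg : ∀ u ∉ A, marginalGain f u A ≤ g) :
    f T - f A ≤ #(T \ A) • g :=
  calc f T - f A ≤ f (A ∪ (T \ A)) - f A := by
        rw [union_sdiff_self_eq_union]
        exact sub_le_sub_right (hmono _ _ subset_union_right) _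
    _ ≤ ∑ v ∈ T \ A, marginalGain f v A := sub_le_sum_marginalGain hsub A (T \ A)
    _ ≤ #(T \ A) • g := sum_le_card_nsmul _ _ _ fun v hv => hg v (mem_sdiff.1 hv).2

end MarginalGain

open Finset in
lemma sub_insert_le_one_sub_inv_mul_sub {V : Type*} [DecidableEq V] {f : Finset V → ℝ}
    (hmono : ∀ A B : Finset V, A ⊆ B → f A ≤ f B)
    (hsub : ∀ A B : Finset V, A ⊆ B → ∀ v ∉ B, marginalGain f v B ≤ marginalGain f v A)
    {k : ℕ} (hk : 0 < k) {A T : Finset V} (hT : #T ≤ k) {w : V}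
    (hw : ∀ u ∉ A, marginalGain f u A ≤ marginalGain f w A) :
    f T - f (insert w A) ≤ (1 - (k : ℝ)⁻¹) * (f T - f A) := by
  have hgain : 0 ≤ marginalGain f w A := sub_nonneg.2 (hmono _ _ (subset_insert w A))
  have hgap : f T - f A ≤ k * marginalGain f w A :=
    calc f T - f A ≤ #(T \ A) * marginalGain f w A := by
          simpa only [nsmul_eq_mul] using sub_le_card_sdiff_nsmul hmono hsub hw
      _ ≤ k * marginalGain f w A := by
          gcongr
          exact_mod_cast (card_le_card sdiff_subset).trans hT
  have hk' : (0 : ℝ) < k := by exact_mod_cast hk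
  have hfrac : (k : ℝ)⁻¹ * (f T - f A) ≤ marginalGain f w A := (inv_mul_le_iff₀ hk').2 hgap
  rw [marginalGain] at hfrac
  linarith

lemma le_pow_mul_of_succ_le_mul {R : Type*} [Semiring R] [PartialOrder R] [IsOrderedRing R]
    {x : ℕ → R} {r : R} (hr : 0 ≤ r) {n : ℕ} (hx : ∀ l < n, x (l + 1) ≤ r * x l) :
    ∀ l ≤ n, x l ≤ r ^ l * x 0 := by
  intro l hl
  induction l with
  | zero => simp
  | succ l ih =>
    calc x (l + 1) ≤ r * x l := hx l hl
      _ ≤ r * (r ^ l * x 0) := mul_le_mul_of_nonneg_left (ih (by omega)) hr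
      _ = r ^ (l + 1) * x 0 := by rw [pow_succ', mul_assoc]

/-- Nemhauser–Wolsey–Fisher: the greedy sequence satisfies
`f (S k) ≥ (1 - 1/e) * max { f S : |S| = k }`. -/
theorem greedy_one_sub_inv_exp_guarantee
    {V : Type*} [Fintype V] [DecidableEq V] (f : Finset V → ℝ)
    (hmono : ∀ A B : Finset V, A ⊆ B → f A ≤ f B)
    (hsub : ∀ A B : Finset V, A ⊆ B → ∀ v ∉ B,
        f (insert v B) - f B ≤ f (insert v A) - f A)
    (hf0 : f ∅ = 0)
    (k : ℕ) (hk1 : 1 ≤ k) (hkn : k ≤ Fintype.card V)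
    (S : ℕ → Finset V) (hS0 : S 0 = ∅)
    (hstep : ∀ l < k, ∃ w ∉ S l,
        S (l + 1) = insert w (S l) ∧
        ∀ u ∉ S l, f (insert u (S l)) - f (S l) ≤ f (insert w (S l)) - f (S l)) :
    (1 - (Real.exp 1)⁻¹) *
        (Finset.powersetCard k (Finset.univ : Finset V)).sup'
          (Finset.powersetCard_nonempty.mpr (by simpa using hkn)) f
      ≤ f (S k) := by
  obtain ⟨T, hT, hOPT⟩ := Finset.exists_mem_eq_sup' _ f
  rw [hOPT]
  have hTk : T.card ≤ k := (Finset.mem_powersetCard.1 hT).2.le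
  have hr : 0 ≤ 1 - (k : ℝ)⁻¹ := sub_nonneg.2 (inv_le_one_of_one_le₀ (by exact_mod_cast hk1))
  have hgap : f T - f (S k) ≤ (1 - (k : ℝ)⁻¹) ^ k * (f T - f (S 0)) := by
    refine le_pow_mul_of_succ_le_mul (x := fun l => f T - f (S l)) hr (fun l hl => ?_) k le_rfl
    obtain ⟨w, -, hSw, hw⟩ := hstep l hl
    change f T - f (S (l + 1)) ≤ _
    rw [hSw]
    exact sub_insert_le_one_sub_inv_mul_sub hmono hsub hk1 hTk hw
  have hexp : (1 - (k : ℝ)⁻¹) ^ k ≤ (Real.exp 1)⁻¹ := by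
    have := Real.one_sub_div_pow_le_exp_neg (n := k) (t := 1) (by exact_mod_cast hk1)
    rwa [one_div, Real.exp_neg] at this
  have hT0 : 0 ≤ f T := hf0 ▸ hmono ∅ T T.empty_subset
  rw [hS0, hf0, sub_zero] at hgap
  linarith [mul_le_mul_of_nonneg_right hexp hT0]
end

section
/- Let V be a finite set with n elements, let f : P(V) → [0, ∞) be a monotone submodular function with f(∅) = 0, let k ∈ {1, …, n}, and let ε ∈ (0, 1). Consider the stochastic greedy algorithm with sample size s = ⌈(n/k)·log(1/ε)⌉: starting from S₀ = ∅, at each step l = 1, …, k a set R_l of s elements is drawn uniformly at random from V \ S_{l−1}, and S_l = S_{l−1} ∪ {v_l} where v_l ∈ R_l maximizes Δ(f, v | S_{l−1}) over v ∈ R_l. Let S_k be the (random) output after k steps. Then the expected value satisfies E[f(S_k)] ≥ (1 − 1/e − ε) · max{ f(S) : S ⊆ V, |S| = k }. -/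
/-!
Fix an optimal `k`-set `T`, the current set `S`, and `D = T \ S` with `d = |D|`. By submodularity
`f T - f S ≤ ∑ u ∈ D, Δ(u | S)`. A uniform `s`-subset `R` of the `N` remaining elements misses `D`
with probability `C(N - d, s) / C(N, s) ≤ (1 - d/N)^s ≤ ε^(d/k) ≤ 1 - (1 - ε) d/k`, and since a
transposition of two elements of `D` permutes the samples, given that `R` meets `D` every element
of `D` is equally likely to lie in `R ∩ D`. The greedy gain is at least the average gain over
`R ∩ D`, so the expected gain of a step is at least `(1 - ε)/k · (f T - f S)`. After `k` steps the
gap to `f T` has shrunk by `(1 - (1 - ε)/k)^k ≤ exp (ε - 1) ≤ 1/e + ε`.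
-/

/-- The distribution of the set held by the stochastic greedy algorithm after
`l` steps.  Starting from `S₀ = ∅`, at each step a sample `R` of `s` elements
(all of the remaining elements if fewer than `s` remain) is drawn uniformly at
random, without replacement, from `V \ S`, independently across steps, and the
element of `R` selected by `sel R S` (intended: a maximizer of the marginal
gain `v ↦ f (insert v S) - f S` over `v ∈ R`, ties broken arbitrarily) is
added to the current set `S`. -/
noncomputable def stochasticGreedy {V : Type*} [Fintype V] [DecidableEq V]
    (sel : Finset V → Finset V → V) (s : ℕ) : ℕ → PMF (Finset V)
  | 0 => PMF.pure ∅
  | l + 1 =>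
    (stochasticGreedy sel s l).bind fun S =>
      (PMF.uniformOfFinset
          (Finset.powersetCard (min s ((Finset.univ : Finset V) \ S).card)
            ((Finset.univ : Finset V) \ S))
          (Finset.powersetCard_nonempty.mpr (min_le_right _ _))).map
        fun R => insert (sel R S) S

open Finset

theorem Nat.choose_mul_pow_le_choose_mul_pow {a b : ℕ} (hab : a ≤ b) (m : ℕ) :
    a.choose m * b ^ m ≤ b.choose m * a ^ m := by
  induction m with
  | zero => simp
  | succ m ih =>
    have key : (a - m) * b ≤ (b - m) * a := by
      rw [Nat.sub_mul, Nat.sub_mul, Nat.mul_comm b a]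
      exact Nat.sub_le_sub_left (Nat.mul_le_mul_left m hab) _
    refine Nat.le_of_mul_le_mul_right (c := m + 1) ?_ m.succ_pos
    calc a.choose (m + 1) * b ^ (m + 1) * (m + 1)
        = a.choose m * b ^ m * ((a - m) * b) := by
          rw [mul_right_comm, Nat.choose_succ_right_eq]; ring
      _ ≤ b.choose m * a ^ m * ((b - m) * a) := Nat.mul_le_mul ih key
      _ = b.choose (m + 1) * a ^ (m + 1) * (m + 1) := by
          rw [mul_right_comm _ (a ^ (m + 1)), Nat.choose_succ_right_eq]; ring

theorem Nat.choose_sub_div_choose_min_le {N d : ℕ} (hd : 0 < d) (hdN : d ≤ N) (s : ℕ) :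
    ((N - d).choose (min s N) : ℝ) / N.choose (min s N) ≤ (1 - d / N) ^ s := by
  have hN : (0 : ℝ) < N := by exact_mod_cast hd.trans_le hdN
  have hbase : 0 ≤ 1 - (d : ℝ) / N := sub_nonneg.2 ((div_le_one hN).2 (by exact_mod_cast hdN))
  rcases le_total s N with hsN | hNs
  · rw [min_eq_left hsN, div_le_iff₀ (by exact_mod_cast Nat.choose_pos hsN),
      show 1 - (d : ℝ) / N = ((N - d : ℕ) : ℝ) / N by field_simp; push_cast [hdN]; ring,
      div_pow, div_mul_eq_mul_div, le_div_iff₀ (by positivity), mul_comm (((N - d : ℕ) : ℝ) ^ s)]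
    exact_mod_cast Nat.choose_mul_pow_le_choose_mul_pow (N.sub_le d) s
  · rw [min_eq_right hNs, Nat.choose_eq_zero_of_lt (by omega), Nat.cast_zero, zero_div]
    exact pow_nonneg hbase s

theorem Real.exp_sub_one_le_inv_exp_one_add {ε : ℝ} (h0 : 0 ≤ ε) (h1 : ε ≤ 1) :
    Real.exp (ε - 1) ≤ (Real.exp 1)⁻¹ + ε := by
  have := convexOn_exp.2 (Set.mem_univ (-1)) (Set.mem_univ 0) (sub_nonneg.2 h1) h0 (by ring)
  simp only [smul_eq_mul, mul_neg, mul_one, mul_zero, add_zero, Real.exp_zero, Real.exp_neg] at this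
  calc Real.exp (ε - 1) = (Real.exp (1 - ε))⁻¹ := by rw [← Real.exp_neg, neg_sub]
    _ ≤ (1 - ε) * (Real.exp 1)⁻¹ + ε := this
    _ ≤ (Real.exp 1)⁻¹ + ε := by nlinarith [Real.exp_pos 1, inv_pos.2 (Real.exp_pos 1)]

namespace PMF

variable {α β : Type*} [Fintype α]

noncomputable def expect (p : PMF α) (g : α → ℝ) : ℝ := ∑ a, (p a).toReal * g a

theorem sum_toReal (p : PMF α) : ∑ a, (p a).toReal = 1 := by
  rw [← ENNReal.toReal_sum fun a _ => p.apply_ne_top a, ← tsum_fintype (L := .unconditional _),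
    p.tsum_coe, ENNReal.toReal_one]

theorem expect_pure (a : α) (g : α → ℝ) : (pure a).expect g = g a := by
  classical
  simp [expect, pure_apply, apply_ite ENNReal.toReal]

theorem expect_bind [Fintype β] (p : PMF α) (q : α → PMF β) (g : β → ℝ) :
    (p.bind q).expect g = p.expect fun a => (q a).expect g := by
  simp only [expect, bind_apply, tsum_fintype]
  simp_rw [ENNReal.toReal_sum fun a _ =>
      ENNReal.mul_ne_top (p.apply_ne_top a) ((q a).apply_ne_top _),
    ENNReal.toReal_mul, sum_mul, mul_sum, mul_assoc]
  exact sum_comm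

theorem expect_map [Fintype β] (p : PMF α) (h : α → β) (g : β → ℝ) :
    (p.map h).expect g = p.expect (g ∘ h) := by
  simp [map, expect_bind, Function.comp_def, expect_pure]

theorem expect_uniformOfFinset (s : Finset α) (hs : s.Nonempty) (g : α → ℝ) :
    (uniformOfFinset s hs).expect g = (#s : ℝ)⁻¹ * ∑ a ∈ s, g a := by
  classical
  simp [expect, uniformOfFinset_apply, apply_ite ENNReal.toReal, mul_sum, ite_mul, sum_ite_mem]

theorem expect_mono (p : PMF α) {g h : α → ℝ} (hgh : ∀ a, g a ≤ h a) : p.expect g ≤ p.expect h :=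
  sum_le_sum fun a _ => mul_le_mul_of_nonneg_left (hgh a) ENNReal.toReal_nonneg

theorem expect_mul_add (p : PMF α) (g : α → ℝ) (b c : ℝ) :
    p.expect (fun a => b * g a + c) = b * p.expect g + c := by
  simp only [expect, mul_add, sum_add_distrib, ← sum_mul, sum_toReal, one_mul, mul_sum]
  congr 1
  exact sum_congr rfl fun a _ => by ring

end PMF

namespace Finset

variable {V : Type*} [DecidableEq V] {W D : Finset V}

theorem sum_powersetCard_filter_mem_swap (hD : D ⊆ W) {u v : V} (hu : u ∈ D) (hv : v ∈ D)
    (m : ℕ) (g : ℕ → ℝ) :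
    ∑ R ∈ powersetCard m W with u ∈ R, g #(R ∩ D)
      = ∑ R ∈ powersetCard m W with v ∈ R, g #(R ∩ D) := by
  set σ := Equiv.swap u v
  have hσ : ∀ {X : Finset V}, u ∈ X → v ∈ X → ∀ x, σ x ∈ X ↔ x ∈ X := by
    intro X huX hvX x
    rcases eq_or_ne x u with rfl | hxu
    · simp [σ, huX, hvX]
    rcases eq_or_ne x v with rfl | hxv
    · simp [σ, huX, hvX]
    · rw [Equiv.swap_apply_of_ne_of_ne hxu hxv]
  have hσσ : ∀ R : Finset V, (R.map σ.toEmbedding).map σ.toEmbedding = R := fun R => by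
    ext x; simp [σ]
  have hinter : ∀ R : Finset V, R.map σ.toEmbedding ∩ D = (R ∩ D).map σ.toEmbedding := fun R => by
    ext x; simp [mem_map_equiv, σ, Equiv.symm_swap, hσ hu hv]
  refine sum_nbij' (fun R => R.map σ.toEmbedding) (fun R => R.map σ.toEmbedding) ?_ ?_
    (fun R _ => hσσ R) (fun R _ => hσσ R) (fun R _ => by rw [hinter, card_map])
  all_goals
    intro R hR
    simp only [mem_filter, mem_powersetCard] at hR ⊢
    refine ⟨⟨fun x hx => ?_, by rw [card_map, hR.1.2]⟩, ?_⟩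
    · rw [mem_map_equiv, Equiv.symm_swap] at hx
      exact (hσ (hD hu) (hD hv) x).1 (hR.1.1 hx)
    · simpa [mem_map_equiv, σ] using hR.2

/-- Samples missing `D` contribute `0⁻¹ * 0 = 0`, so the left side sums, over the samples meeting
`D`, the average of `Δ` on `R ∩ D`. -/
theorem sum_powersetCard_inv_card_inter_mul_sum (hD : D ⊆ W) (m : ℕ) (Δ : V → ℝ) :
    ∑ R ∈ powersetCard m W, (#(R ∩ D) : ℝ)⁻¹ * ∑ u ∈ R ∩ D, Δ u
      = #{R ∈ powersetCard m W | (R ∩ D).Nonempty} / #D * ∑ u ∈ D, Δ u := by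
  set weight : V → ℝ := fun u => ∑ R ∈ powersetCard m W with u ∈ R, (#(R ∩ D) : ℝ)⁻¹
  have hweighted : ∀ Δ : V → ℝ, ∑ R ∈ powersetCard m W, (#(R ∩ D) : ℝ)⁻¹ * ∑ u ∈ R ∩ D, Δ u
      = ∑ u ∈ D, weight u * Δ u := fun Δ => by
    simp_rw [mul_sum, weight, sum_mul]
    exact sum_comm' fun R u => by simp only [mem_filter, mem_inter]; tauto
  have hweight_sum : ∑ u ∈ D, weight u = #{R ∈ powersetCard m W | (R ∩ D).Nonempty} := by
    have := hweighted 1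
    simp only [Pi.one_apply, sum_const, nsmul_eq_mul, mul_one] at this
    rw [← this, card_filter, Nat.cast_sum]
    refine sum_congr rfl fun R _ => ?_
    rcases (R ∩ D).eq_empty_or_nonempty with h | h
    · simp [h]
    · simp [h, h.card_pos.ne']
  rcases D.eq_empty_or_nonempty with rfl | ⟨u₀, hu₀⟩
  · simp
  have hweight_const : ∀ u ∈ D, weight u = weight u₀ := fun u hu =>
    sum_powersetCard_filter_mem_swap hD hu hu₀ m fun t => (t : ℝ)⁻¹
  rw [hweighted, sum_congr rfl fun u hu => by rw [hweight_const u hu], ← mul_sum,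
    ← hweight_sum, sum_congr rfl hweight_const, sum_const, nsmul_eq_mul,
    mul_div_cancel_left₀ _ (Nat.cast_ne_zero.2 (card_ne_zero_of_mem hu₀))]

theorem card_filter_inter_nonempty_div_mul_sum_le (hD : D ⊆ W) (m : ℕ) {Δ : V → ℝ}
    (hΔ : ∀ u, 0 ≤ Δ u) {g : Finset V → V} (hg : ∀ R : Finset V, ∀ u ∈ R, Δ u ≤ Δ (g R)) :
    #{R ∈ powersetCard m W | (R ∩ D).Nonempty} / #D * ∑ u ∈ D, Δ u
      ≤ ∑ R ∈ powersetCard m W, Δ (g R) := by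
  rw [← sum_powersetCard_inv_card_inter_mul_sum hD]
  refine sum_le_sum fun R _ => ?_
  rcases (R ∩ D).eq_empty_or_nonempty with h | h
  · simpa [h] using hΔ (g R)
  · rw [inv_mul_le_iff₀ (by exact_mod_cast h.card_pos)]
    calc ∑ u ∈ R ∩ D, Δ u ≤ ∑ _u ∈ R ∩ D, Δ (g R) :=
          sum_le_sum fun u hu => hg R u (mem_inter.1 hu).1
      _ = #(R ∩ D) * Δ (g R) := by rw [sum_const, nsmul_eq_mul]

theorem card_filter_inter_nonempty_add_choose (hD : D ⊆ W) (m : ℕ) :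
    #{R ∈ powersetCard m W | (R ∩ D).Nonempty} + (#W - #D).choose m = (#W).choose m := by
  have hmiss : {R ∈ powersetCard m W | ¬(R ∩ D).Nonempty} = powersetCard m (W \ D) := by
    ext R
    simp only [mem_filter, mem_powersetCard, subset_sdiff, not_nonempty_iff_eq_empty,
      ← disjoint_iff_inter_eq_empty]
    tauto
  rw [← card_sdiff_of_subset hD, ← card_powersetCard, ← hmiss, card_filter_add_card_filter_not,
    card_powersetCard]

theorem one_sub_div_le_card_filter_inter_nonempty_div (hD : D ⊆ W) (hd : 0 < #D) {k : ℕ}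
    (hdk : #D ≤ k) {ε : ℝ} (hε0 : 0 < ε) {s : ℕ}
    (hs : #W * Real.log (1 / ε) ≤ s * k) :
    (1 - ε) / k
      ≤ #{R ∈ powersetCard (min s #W) W | (R ∩ D).Nonempty} / (#W).choose (min s #W) / #D := by
  have hdW : #D ≤ #W := card_le_card hD
  have hW : (0 : ℝ) < #W := by exact_mod_cast hd.trans_le hdW
  have hdR : (0 : ℝ) < #D := by exact_mod_cast hd
  have hkR : (0 : ℝ) < k := by exact_mod_cast hd.trans_le hdk
  have hhit : (#{R ∈ powersetCard (min s #W) W | (R ∩ D).Nonempty} : ℝ) / (#W).choose (min s #W)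
      = 1 - ((#W - #D).choose (min s #W) : ℝ) / (#W).choose (min s #W) := by
    rw [eq_sub_iff_add_eq, ← add_div, div_eq_one_iff_eq (by exact_mod_cast
      (Nat.choose_pos (min_le_right s #W)).ne'), ← Nat.cast_add,
      card_filter_inter_nonempty_add_choose hD]
  have hexponent : -(s * (#D / #W : ℝ)) ≤ Real.log ε * (#D / k) := by
    rw [← neg_neg (Real.log ε), ← Real.log_inv, ← one_div, neg_mul, neg_le_neg_iff,
      div_eq_mul_inv, div_eq_mul_inv]
    have := mul_le_mul_of_nonneg_left hs (by positivity : (0 : ℝ) ≤ #D * (#W : ℝ)⁻¹ * (k : ℝ)⁻¹)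
    field_simp at this ⊢
    linarith
  have hmiss : ((#W - #D).choose (min s #W) : ℝ) / (#W).choose (min s #W)
      ≤ 1 + #D / k * (ε - 1) :=
    calc ((#W - #D).choose (min s #W) : ℝ) / (#W).choose (min s #W)
        ≤ (1 - #D / #W) ^ s := Nat.choose_sub_div_choose_min_le hd hdW s
      _ ≤ Real.exp (-(#D / #W)) ^ s :=
          pow_le_pow_left₀ (sub_nonneg.2 ((div_le_one hW).2 (by exact_mod_cast hdW)))
            (Real.one_sub_le_exp_neg _) s
      _ = Real.exp (-(s * (#D / #W))) := by rw [← Real.exp_nat_mul, mul_neg]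
      _ ≤ Real.exp (Real.log ε * (#D / k)) := Real.exp_le_exp.2 hexponent
      _ = (1 + (ε - 1)) ^ ((#D : ℝ) / k) := by rw [add_sub_cancel, Real.rpow_def_of_pos hε0]
      _ ≤ 1 + #D / k * (ε - 1) :=
          rpow_one_add_le_one_add_mul_self (by linarith) (by positivity)
            ((div_le_one hkR).2 (by exact_mod_cast hdk))
  rw [hhit, le_div_iff₀ hdR]
  calc (1 - ε) / k * #D = -(#D / k * (ε - 1)) := by ring
    _ ≤ _ := by linarith

end Finset

section Submodular

variable {V : Type*} [DecidableEq V] {f : Finset V → ℝ}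

theorem sub_le_sum_marginal (hmono : ∀ A B : Finset V, A ⊆ B → f A ≤ f B)
    (hsub : ∀ A B : Finset V, A ⊆ B → ∀ v ∉ B, f (insert v B) - f B ≤ f (insert v A) - f A)
    (S T : Finset V) :
    f (S ∪ T) - f S ≤ ∑ u ∈ T, (f (insert u S) - f S) := by
  induction T using Finset.induction_on with
  | empty => simp
  | @insert a T ha ih =>
    rw [sum_insert ha, union_insert]
    by_cases haST : a ∈ S ∪ T
    · rw [insert_eq_of_mem haST]
      linarith [hmono S (insert a S) (subset_insert a S)]
    · linarith [hsub S (S ∪ T) subset_union_left a haST]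

theorem add_mul_sub_le_average_insert [Fintype V]
    (hmono : ∀ A B : Finset V, A ⊆ B → f A ≤ f B)
    (hsub : ∀ A B : Finset V, A ⊆ B → ∀ v ∉ B, f (insert v B) - f B ≤ f (insert v A) - f A)
    {k : ℕ} {T : Finset V} (hT : #T ≤ k) {ε : ℝ} (hε0 : 0 < ε) (hε1 : ε < 1) {s : ℕ}
    (hs : Fintype.card V * Real.log (1 / ε) ≤ s * k) (S : Finset V) {sel : Finset V → V}
    (hsel : ∀ R : Finset V, ∀ u ∈ R, f (insert u S) - f S ≤ f (insert (sel R) S) - f S) :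
    f S + (1 - ε) / k * (f T - f S)
      ≤ (#(powersetCard (min s #(univ \ S)) (univ \ S)) : ℝ)⁻¹
          * ∑ R ∈ powersetCard (min s #(univ \ S)) (univ \ S), f (insert (sel R) S) := by
  set W := univ \ S
  set Ω := powersetCard (min s #W) W
  set Δ : V → ℝ := fun u => f (insert u S) - f S
  set D := T \ S
  have hΔ : ∀ u, 0 ≤ Δ u := fun u => sub_nonneg.2 (hmono _ _ (subset_insert u S))
  have hDW : D ⊆ W := sdiff_subset_sdiff (subset_univ T) le_rfl
  have hgain : f T - f S ≤ ∑ u ∈ D, Δ u := by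
    have := sub_le_sum_marginal hmono hsub S D
    rw [union_sdiff_self_eq_union] at this
    linarith [hmono T (S ∪ T) subset_union_right]
  have hΩ : (0 : ℝ) < #Ω := by
    rw [card_powersetCard]; exact_mod_cast Nat.choose_pos (min_le_right s #W)
  have hhit : (1 - ε) / k * ∑ u ∈ D, Δ u
      ≤ #{R ∈ Ω | (R ∩ D).Nonempty} / #Ω / #D * ∑ u ∈ D, Δ u := by
    rcases D.eq_empty_or_nonempty with hD | hD
    · simp [hD]
    refine mul_le_mul_of_nonneg_right ?_ (sum_nonneg fun u _ => hΔ u)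
    rw [card_powersetCard]
    refine one_sub_div_le_card_filter_inter_nonempty_div hDW hD.card_pos
      ((card_le_card sdiff_subset).trans hT) hε0 (le_trans ?_ hs)
    exact mul_le_mul_of_nonneg_right (by exact_mod_cast card_le_univ W)
      (Real.log_nonneg (by rw [one_div]; exact (one_le_inv₀ hε0).2 hε1.le))
  have hselect := card_filter_inter_nonempty_div_mul_sum_le hDW (min s #W) hΔ hsel
  have hsplit : (#Ω : ℝ)⁻¹ * ∑ R ∈ Ω, f (insert (sel R) S)
      = f S + (#Ω : ℝ)⁻¹ * ∑ R ∈ Ω, Δ (sel R) := by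
    simp only [Δ, sum_sub_distrib, sum_const, nsmul_eq_mul]
    field_simp
    ring
  rw [hsplit, add_le_add_iff_left]
  calc (1 - ε) / k * (f T - f S)
      ≤ (1 - ε) / k * ∑ u ∈ D, Δ u :=
        mul_le_mul_of_nonneg_left hgain (div_nonneg (by linarith) k.cast_nonneg)
    _ ≤ #{R ∈ Ω | (R ∩ D).Nonempty} / #Ω / #D * ∑ u ∈ D, Δ u := hhit
    _ = (#Ω : ℝ)⁻¹ * (#{R ∈ Ω | (R ∩ D).Nonempty} / #D * ∑ u ∈ D, Δ u) := by ring
    _ ≤ (#Ω : ℝ)⁻¹ * ∑ R ∈ Ω, Δ (sel R) := by gcongr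

end Submodular

theorem expect_stochasticGreedy_succ {V : Type*} [Fintype V] [DecidableEq V]
    (sel : Finset V → Finset V → V) (s l : ℕ) (g : Finset V → ℝ) :
    (stochasticGreedy sel s (l + 1)).expect g
      = (stochasticGreedy sel s l).expect fun S =>
          (#(powersetCard (min s #(univ \ S)) (univ \ S)) : ℝ)⁻¹
            * ∑ R ∈ powersetCard (min s #(univ \ S)) (univ \ S), g (insert (sel R S) S) := by
  simp only [stochasticGreedy, PMF.expect_bind, PMF.expect_map, PMF.expect_uniformOfFinset,
    Function.comp_def]

theorem sub_le_one_sub_pow_mul {x : ℕ → ℝ} {M c : ℝ} (hc : c ≤ 1)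
    (h : ∀ l, x l + c * (M - x l) ≤ x (l + 1)) (l : ℕ) :
    M - x l ≤ (1 - c) ^ l * (M - x 0) := by
  induction l with
  | zero => simp
  | succ l ih =>
    calc M - x (l + 1) ≤ (1 - c) * (M - x l) := by linarith [h l]
      _ ≤ (1 - c) * ((1 - c) ^ l * (M - x 0)) := by gcongr
      _ = (1 - c) ^ (l + 1) * (M - x 0) := by ring

/-- Mirzasoleiman et al.: stochastic greedy with sample size
`s = ⌈(n/k) · log (1/ε)⌉` satisfies
`E[f (S k)] ≥ (1 - 1/e - ε) * max { f S : |S| = k }`. -/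
theorem stochastic_greedy_guarantee
    {V : Type*} [Fintype V] [DecidableEq V] (f : Finset V → ℝ)
    (hnonneg : ∀ A : Finset V, 0 ≤ f A)
    (hmono : ∀ A B : Finset V, A ⊆ B → f A ≤ f B)
    (hsub : ∀ A B : Finset V, A ⊆ B → ∀ v ∉ B,
        f (insert v B) - f B ≤ f (insert v A) - f A)
    (k : ℕ) (hk1 : 1 ≤ k) (hkn : k ≤ Fintype.card V)
    (ε : ℝ) (hε0 : 0 < ε) (hε1 : ε < 1)
    (s : ℕ) (hs : s = ⌈((Fintype.card V : ℝ) / k) * Real.log (1 / ε)⌉₊)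
    (sel : Finset V → Finset V → V)
    (hsel : ∀ R S : Finset V, R.Nonempty →
        sel R S ∈ R ∧
        ∀ u ∈ R, f (insert u S) - f S ≤ f (insert (sel R S) S) - f S) :
    (1 - (Real.exp 1)⁻¹ - ε) *
        (Finset.powersetCard k (Finset.univ : Finset V)).sup'
          (Finset.powersetCard_nonempty.mpr (by simpa using hkn)) f
      ≤ ∑ T : Finset V, (stochasticGreedy sel s k T).toReal * f T := by
  obtain ⟨T, hT, hfT⟩ := exists_mem_eq_sup' (s := powersetCard k (univ : Finset V))
    (powersetCard_nonempty.mpr (by simpa using hkn)) f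
  rw [hfT]
  set E : ℕ → ℝ := fun l => (stochasticGreedy sel s l).expect f
  set c := (1 - ε) / k
  have hk : (1 : ℝ) ≤ k := by exact_mod_cast hk1
  have hsk : Fintype.card V * Real.log (1 / ε) ≤ s * k := by
    rw [← div_mul_cancel₀ (Fintype.card V : ℝ) (by positivity : (k : ℝ) ≠ 0), mul_right_comm, hs]
    exact mul_le_mul_of_nonneg_right (Nat.le_ceil _) (by positivity)
  have hstep : ∀ l, E l + c * (f T - E l) ≤ E (l + 1) := fun l => by
    calc E l + c * (f T - E l)
        = (stochasticGreedy sel s l).expect fun S => (1 - c) * f S + c * f T := by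
          rw [PMF.expect_mul_add]; ring
      _ ≤ (stochasticGreedy sel s (l + 1)).expect f := by
          rw [expect_stochasticGreedy_succ]
          refine PMF.expect_mono _ fun S => ?_
          linarith [add_mul_sub_le_average_insert hmono hsub (mem_powersetCard.1 hT).2.le hε0 hε1
            hsk S fun R u hu => (hsel R S ⟨u, hu⟩).2 u hu]
  have hgap := sub_le_one_sub_pow_mul (div_le_one_of_le₀ (by linarith) (by positivity)) hstep k
  have hcontract : (1 - c) ^ k ≤ (Real.exp 1)⁻¹ + ε :=
    (Real.one_sub_div_pow_le_exp_neg (by linarith)).trans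
      (by simpa using Real.exp_sub_one_le_inv_exp_one_add hε0.le hε1.le)
  have hE0 : E 0 = f ∅ := PMF.expect_pure ∅ f
  have hopt : 0 ≤ f T - f ∅ := sub_nonneg.2 (hmono ∅ T (empty_subset T))
  calc (1 - (Real.exp 1)⁻¹ - ε) * f T
      ≤ f T - ((Real.exp 1)⁻¹ + ε) * (f T - f ∅) := by
        nlinarith [hnonneg ∅, inv_pos.2 (Real.exp_pos 1)]
    _ ≤ f T - (1 - c) ^ k * (f T - E 0) := by
        rw [hE0]; linarith [mul_le_mul_of_nonneg_right hcontract hopt]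
    _ ≤ E k := by linarith
end
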